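/- arXiv:1807.01843 — 6 statements merged into one kernel-verified Lean document; each statement's English description precedes it below -/
import Mathlib

section
/- Define Q : (ℝ² \ {(0,0)}) → ℕ ∪ {∞} by Q(a,b) = ∞ if b/a is irrational, and Q(a,b) = q if b/a = p/q in lowest terms with q ∈ ℕ₊. Let S ⊆ ℝ \ {0} be a set. If there exists a₀ ∈ S with sup_{b ∈ S} Q(a₀, b) = ∞, then for every a ∈ S, sup_{b ∈ S} Q(a, b) = ∞. -/
open scoped Classical

/-- `Q a b` is the reduced denominator of `b / a` if it is rational, and `⊤` otherwise. -/
noncomputable def Q (a b : ℝ) : ℕ∞ :=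
  if h : ∃ q : ℚ, (q : ℝ) = b / a then (h.choose.den : ℕ∞) else ⊤

lemma Q_eq_of (a b : ℝ) (q : ℚ) (hq : (q : ℝ) = b / a) : Q a b = (q.den : ℕ∞) := by
  have h : ∃ q : ℚ, (q : ℝ) = b / a := ⟨q, hq⟩
  rw [Q, dif_pos h]
  have : h.choose = q := by
    have h1 := h.choose_spec
    exact_mod_cast h1.trans hq.symm
  rw [this]

lemma Q_eq_top (a b : ℝ) (h : ¬ ∃ q : ℚ, (q : ℝ) = b / a) : Q a b = ⊤ := by
  rw [Q, dif_neg h]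

theorem stmt_4 (S : Set ℝ) (hS : ∀ x ∈ S, x ≠ 0)
    (h : ∃ a₀ ∈ S, (⨆ b ∈ S, Q a₀ b) = ⊤) :
    ∀ a ∈ S, (⨆ b ∈ S, Q a b) = ⊤ := by
  obtain ⟨a₀, ha₀S, ha₀⟩ := h
  intro a haS
  have ha : a ≠ 0 := hS a haS
  have ha₀0 : a₀ ≠ 0 := hS a₀ ha₀S
  by_cases hr : ∃ r : ℚ, (r : ℝ) = a₀ / a
  · obtain ⟨r, hr⟩ := hr
    have hr0 : r ≠ 0 := by
      intro h0
      rw [h0] at hr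
      exact ha₀0 (by field_simp at hr; simpa using hr.symm)
    set K := r⁻¹.den with hK
    have hKpos : 0 < K := r⁻¹.pos
    rw [iSup₂_eq_top] at ha₀ ⊢
    intro n hn
    obtain ⟨m, rfl⟩ := WithTop.ne_top_iff_exists.mp hn.ne |>.imp (fun _ h => h.symm)
    obtain ⟨b, hbS, hb⟩ := ha₀ (((m + 1) * K : ℕ) : ℕ∞) (WithTop.coe_lt_top _)
    refine ⟨b, hbS, ?_⟩
    by_cases hs : ∃ s : ℚ, (s : ℝ) = b / a₀
    · obtain ⟨s, hs⟩ := hs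
      -- b / a = s * r
      have hba : ((s * r : ℚ) : ℝ) = b / a := by
        push_cast
        rw [hs, hr]
        field_simp
      rw [Q_eq_of a b (s * r) hba]
      rw [Q_eq_of a₀ b s hs] at hb
      -- s = (s*r) * r⁻¹, so s.den ∣ (s*r).den * K
      have hdvd : s.den ∣ (s * r).den * K := by
        have : s = (s * r) * r⁻¹ := by field_simp
        calc s.den = ((s * r) * r⁻¹).den := by rw [← this]
          _ ∣ (s * r).den * K := Rat.mul_den_dvd _ _
      have hle : s.den ≤ (s * r).den * K := Nat.le_of_dvd (by positivity) hdvd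
      have hb' : (m + 1) * K < s.den := by exact_mod_cast hb
      have h1 : m * K < (m + 1) * K := (Nat.mul_lt_mul_right hKpos).mpr (Nat.lt_succ_self m)
      have h2 : m * K < (s * r).den * K := lt_of_lt_of_le (h1.trans hb') hle
      have hm : m < (s * r).den := lt_of_mul_lt_mul_right h2 (Nat.zero_le K)
      exact Nat.cast_lt.mpr hm
    · -- b / a₀ irrational ⇒ b / a irrational
      have : ¬ ∃ q : ℚ, (q : ℝ) = b / a := by
        rintro ⟨q, hq⟩
        refine hs ⟨q * r⁻¹, ?_⟩
        push_cast
        rw [hq, hr]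
        field_simp
      rw [Q_eq_top a b this]
      exact hn
  · -- a₀ / a irrational, so Q a a₀ = ⊤
    have : Q a a₀ = ⊤ := Q_eq_top a a₀ hr
    have hle : (⊤ : ℕ∞) ≤ ⨆ b ∈ S, Q a b := this ▸ le_iSup₂ (f := fun b _ => Q a b) a₀ ha₀S
    exact top_le_iff.mp hle
end

section
/- Let S ⊆ ℝ \ {0} be a symmetric nonempty set such that there exists a ∈ S with sup_{b ∈ S} Q(a, b) = ∞ (where Q(a,b) is the reduced denominator of b/a, and ∞ if b/a irrational). Then the union over all a, b ∈ S of the sets aℤ + bℤ is dense in ℝ. -/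
open scoped Classical

theorem stmt_7 (S : Set ℝ) (hne : S.Nonempty) (h0 : ∀ x ∈ S, x ≠ 0)
    (hsym : S = -S) (h : ∃ a ∈ S, (⨆ b ∈ S, Q a b) = ⊤) :
    Dense (⋃ a ∈ S, ⋃ b ∈ S, {x : ℝ | ∃ m n : ℤ, x = m * a + n * b}) := by
  obtain ⟨a, haS, hsup⟩ := h
  have ha : a ≠ 0 := h0 a haS
  rw [Metric.dense_iff]
  intro x ε hε
  -- pick n with |a|/ε < n
  obtain ⟨N, hN⟩ := exists_nat_gt (|a| / ε)
  -- get b with Q a b > N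
  have hlt : (N : ℕ∞) < ⨆ b ∈ S, Q a b := by
    rw [hsup]; exact lt_of_lt_of_le (WithTop.coe_lt_top N) le_rfl
  rw [lt_iSup_iff] at hlt
  obtain ⟨b, hb⟩ := hlt
  rw [lt_iSup_iff] at hb
  obtain ⟨hbS, hQ⟩ := hb
  have hb0 : b ≠ 0 := h0 b hbS
  -- it suffices to find y in a·ℤ + b·ℤ near x
  have hsub : {y : ℝ | ∃ m n : ℤ, y = m * a + n * b} ⊆
      ⋃ a ∈ S, ⋃ b ∈ S, {x : ℝ | ∃ m n : ℤ, x = m * a + n * b} := by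
    intro y hy
    simp only [Set.mem_iUnion]
    exact ⟨a, haS, b, hbS, hy⟩
  by_cases hrat : ∃ q : ℚ, (q : ℝ) = b / a
  · -- rational case: Q a b = den > N, the set contains (a/q)·ℤ
    obtain ⟨q, hq⟩ := hrat
    have hQval : Q a b = (Exists.choose (⟨q, hq⟩ : ∃ q : ℚ, (q : ℝ) = b / a) |>.den : ℕ∞) :=
      dif_pos _
    set r := Exists.choose (⟨q, hq⟩ : ∃ q : ℚ, (q : ℝ) = b / a) with hr
    have hrspec : (r : ℝ) = b / a := Exists.choose_spec (⟨q, hq⟩ : ∃ q : ℚ, (q : ℝ) = b / a)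
    have hden : N < r.den := by
      rw [hQval] at hQ
      exact_mod_cast hQ
    have hdenpos : (0 : ℤ) < (r.den : ℤ) := by exact_mod_cast r.pos
    -- b = a * r.num / r.den
    have hbval : b * r.den = a * r.num := by
      have : (r : ℝ) * a = b := by rw [hrspec]; field_simp
      rw [Rat.cast_def] at this
      have hd : ((r.den : ℝ)) ≠ 0 := by positivity
      field_simp at this ⊢
      nlinarith [this]
    -- Bezout: u * num + v * den = 1
    have hcop : IsCoprime (r.num) ((r.den : ℤ)) := by
      rw [Int.isCoprime_iff_gcd_eq_one]
      exact r.reduced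
    obtain ⟨u, v, huv⟩ := hcop
    -- the element a / r.den is m*a + n*b with m = v, n = u
    set c : ℝ := a / r.den with hc
    have hc0 : c ≠ 0 := by
      simp only [hc]
      exact div_ne_zero ha (by positivity)
    have hd : ((r.den : ℝ)) ≠ 0 := by positivity
    have h1 : (u : ℝ) * r.num + v * r.den = 1 := by exact_mod_cast huv
    have hceq : (v : ℝ) * a + u * b = c := by
      rw [hc, eq_div_iff hd]
      linear_combination (u : ℝ) * hbval + a * h1
    have hmem : ∀ k : ℤ, ∃ m n : ℤ, (k : ℝ) * c = m * a + n * b := by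
      intro k
      refine ⟨k * v, k * u, ?_⟩
      rw [← hceq]
      push_cast
      ring
    -- approximate x by a multiple of |c|
    have hcabs : |c| < ε := by
      have h1 : |c| = |a| / r.den := by
        rw [hc, abs_div, abs_of_pos (show (0:ℝ) < r.den by positivity)]
      have h2 : (N : ℝ) < r.den := by exact_mod_cast hden
      have h3 : |a| / ε < r.den := lt_of_le_of_lt (le_of_lt hN) h2
      rw [h1]
      rw [div_lt_iff₀ (by positivity : (0:ℝ) < (r.den:ℝ))]
      calc |a| < ε * r.den := by
            rw [div_lt_iff₀ hε] at h3; linarith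
        _ = ε * r.den := rfl
    set d : ℝ := |c| with hd2
    set k : ℤ := ⌊x / d⌋ with hk
    have habs : (0:ℝ) < d := abs_pos.mpr hc0
    have h2 : (k : ℝ) ≤ x / d := Int.floor_le _
    have h3 : x / d < k + 1 := Int.lt_floor_add_one _
    have hclose : |x - (k : ℝ) * d| < ε := by
      rw [abs_sub_lt_iff]
      constructor
      · nlinarith [(div_lt_iff₀ habs).mp h3]
      · nlinarith [(le_div_iff₀ habs).mp h2]
    have hy : ∃ m n : ℤ, (k : ℝ) * d = m * a + n * b := by
      rcases abs_choice c with hch | hch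
      · rw [hd2, hch]; exact hmem k
      · rw [hd2, hch]
        obtain ⟨m, n, hmn⟩ := hmem (-k)
        refine ⟨m, n, ?_⟩
        push_cast at hmn ⊢
        linarith [hmn]
    refine ⟨(k : ℝ) * d, ?_, hsub hy⟩
    rw [Metric.mem_ball, Real.dist_eq, abs_sub_comm]
    exact hclose
  · -- irrational case: the subgroup a·ℤ + b·ℤ is dense
    set H : AddSubgroup ℝ :=
      { carrier := {y : ℝ | ∃ m n : ℤ, y = m * a + n * b}
        zero_mem' := ⟨0, 0, by push_cast; ring⟩
        add_mem' := by
          rintro p q ⟨m₁, n₁, rfl⟩ ⟨m₂, n₂, rfl⟩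
          exact ⟨m₁ + m₂, n₁ + n₂, by push_cast; ring⟩
        neg_mem' := by
          rintro p ⟨m, n, rfl⟩
          exact ⟨-m, -n, by push_cast; ring⟩ } with hH
    rcases AddSubgroup.dense_or_cyclic H with hd | ⟨c, hcyc⟩
    · obtain ⟨y, hyH, hy⟩ := Metric.dense_iff.mp hd x ε hε
      exact ⟨y, hyH, hsub hy⟩
    · exfalso
      have haH : a ∈ H := ⟨1, 0, by push_cast; ring⟩
      have hbH : b ∈ H := ⟨0, 1, by push_cast; ring⟩
      rw [hcyc, AddSubgroup.mem_closure_singleton] at haH hbH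
      obtain ⟨j, hj⟩ := haH
      obtain ⟨l, hl⟩ := hbH
      have hj0 : (j : ℝ) ≠ 0 := by
        intro hj0
        apply ha
        rw [← hj]
        simp [zsmul_eq_mul, hj0]
      apply hrat
      refine ⟨(l : ℚ) / (j : ℚ), ?_⟩
      have hc0 : c ≠ 0 := by
        intro hc0
        apply ha; rw [← hj, hc0]; simp
      push_cast
      rw [← hj, ← hl]
      simp only [zsmul_eq_mul]
      field_simp
end

section
/- An additive subgroup G of ℝᵈ is discrete if and only if it is generated by some linearly independent family of vectors of ℝᵈ (i.e., G is a relative lattice). -/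
open Submodule Module

lemma aux_eps {E : Type*} [NormedAddCommGroup E] (S : AddSubgroup E)
    [DiscreteTopology S] : ∃ ε > (0 : ℝ), ∀ x ∈ S, ‖x‖ < ε → x = 0 := by
  have : IsOpen ({0} : Set S) := isOpen_discrete _
  rw [Metric.isOpen_iff] at this
  obtain ⟨ε, hε, h⟩ := this 0 rfl
  refine ⟨ε, hε, fun x hx hn => ?_⟩
  have : (⟨x, hx⟩ : S) ∈ Metric.ball (0 : S) ε := by
    rwa [mem_ball_zero_iff]
  simpa [Subtype.ext_iff] using h this

lemma aux_fwd {E : Type*} [NormedAddCommGroup E] [NormedSpace ℝ E] [FiniteDimensional ℝ E]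
    (L : Submodule ℤ E) [DiscreteTopology L] :
    ∃ (n : ℕ) (v : Fin n → E), LinearIndependent ℝ v ∧ span ℤ (Set.range v) = L := by
  classical
  let f := (span ℝ (L : Set E)).subtype
  let L₀ := L.comap (f.restrictScalars ℤ)
  have h_img : f '' L₀ = L := by
    rw [← LinearMap.coe_restrictScalars ℤ f, ← Submodule.map_coe (f.restrictScalars ℤ),
      Submodule.map_comap_eq_self]
    exact fun x hx ↦ LinearMap.mem_range.mpr ⟨⟨x, Submodule.subset_span hx⟩, rfl⟩
  have hdisc : DiscreteTopology L₀ := by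
    refine DiscreteTopology.preimage_of_continuous_injective (L : Set E) ?_ (injective_subtype _)
    exact LinearMap.continuous_of_finiteDimensional f
  have hZL : IsZLattice ℝ L₀ := ⟨by
    rw [← (Submodule.map_injective_of_injective (injective_subtype _)).eq_iff, Submodule.map_span,
      Submodule.map_top, range_subtype, h_img]⟩
  have : Module.Finite ℤ L₀ := ZLattice.module_finite ℝ L₀
  have : Module.Free ℤ L₀ := ZLattice.module_free ℝ L₀
  let b₀ := Module.Free.chooseBasis ℤ L₀
  let bF := b₀.ofZLatticeBasis ℝ L₀
  have : Fintype (Module.Free.ChooseBasisIndex ℤ L₀) := inferInstance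
  let e := Fintype.equivFin (Module.Free.ChooseBasisIndex ℤ L₀)
  refine ⟨Fintype.card (Module.Free.ChooseBasisIndex ℤ L₀),
    fun i => f (bF (e.symm i)), ?_, ?_⟩
  · have h1 : LinearIndependent ℝ (bF ∘ e.symm) :=
      by simpa [Basis.coe_reindex] using (bF.reindex e).linearIndependent
    exact h1.map' f (ker_subtype _)
  · have hsp : span ℤ (Set.range bF) = L₀ := b₀.ofZLatticeBasis_span ℝ
    have hrange : Set.range (fun i => f (bF (e.symm i)))
        = (f.restrictScalars ℤ) '' Set.range bF := by
      ext x
      simp only [Set.mem_range, Set.mem_image]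
      constructor
      · rintro ⟨i, rfl⟩; exact ⟨bF (e.symm i), ⟨_, rfl⟩, rfl⟩
      · rintro ⟨y, ⟨j, rfl⟩, rfl⟩; exact ⟨e j, by simp⟩
    rw [hrange]
    have h2 : span ℤ ((f.restrictScalars ℤ) '' Set.range bF)
        = Submodule.map (f.restrictScalars ℤ) (span ℤ (Set.range bF)) :=
      (Submodule.map_span _ _).symm
    rw [h2, hsp]
    exact SetLike.ext'_iff.mpr h_img

theorem stmt_10 (d : ℕ) (G : AddSubgroup (EuclideanSpace ℝ (Fin d))) :
    (∃ ε > (0 : ℝ), ∀ x ∈ G, ‖x‖ < ε → x = 0) ↔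
      ∃ (n : ℕ) (v : Fin n → EuclideanSpace ℝ (Fin d)),
        LinearIndependent ℝ v ∧ G = AddSubgroup.closure (Set.range v) := by
  constructor
  · rintro ⟨ε, hε, h⟩
    set L : Submodule ℤ (EuclideanSpace ℝ (Fin d)) := AddSubgroup.toIntSubmodule G with hL
    have : DiscreteTopology L := by
      refine DiscreteTopology.of_forall_le_norm hε fun x hx => ?_
      by_contra hlt
      push_neg at hlt
      exact hx (Subtype.ext (h x.1 x.2 (by simpa using hlt)))
    obtain ⟨n, v, hli, hspan⟩ := aux_fwd L
    refine ⟨n, v, hli, ?_⟩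
    have := congrArg Submodule.toAddSubgroup hspan
    rw [span_int_eq_addSubgroupClosure] at this
    simpa [hL] using this.symm
  · rintro ⟨n, v, hv, rfl⟩
    classical
    have hs : LinearIndepOn ℝ id (Set.range v) :=
      hv.linearIndepOn_id
    let t := LinearIndepOn.extend (v := id) (s := Set.range v) hs (Set.subset_univ _)
    let b := Basis.extend (s := Set.range v) hs
    have hbli : LinearIndependent ℝ ((↑) : t → EuclideanSpace ℝ (Fin d)) :=
      LinearIndepOn.linearIndepOn_extend (v := id) (s := Set.range v) hs _
    have htfin : t.Finite := hbli.setFinite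
    have : Finite t := htfin.to_subtype
    have hrb : Set.range b = t := by
      rw [Basis.coe_extend, Subtype.range_coe]
    have : DiscreteTopology (span ℤ (Set.range b)).toAddSubgroup := inferInstance
    obtain ⟨ε, hε, h⟩ := aux_eps (span ℤ (Set.range b)).toAddSubgroup
    refine ⟨ε, hε, fun x hx hn => ?_⟩
    refine h x ?_ hn
    have hsub : Set.range v ⊆ (span ℤ (Set.range b) : Set _) := by
      rw [hrb]
      exact fun y hy => subset_span (LinearIndepOn.subset_extend (v := id) (s := Set.range v) hs _ hy)
    have := AddSubgroup.closure_le ((span ℤ (Set.range b)).toAddSubgroup) |>.mpr hsub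
    exact this hx
end

section
/- An additive subgroup G of ℝᵈ is dense in ℝᵈ if and only if for every linear subspace H ⊆ ℝᵈ of codimension 1 and every vector c ∈ ℝᵈ, G is not contained in H + cℤ. -/
open Module

lemma lemA {E : Type} [NormedAddCommGroup E] [NormedSpace ℝ E] [FiniteDimensional ℝ E]
    (C : AddSubgroup E) (hC : IsClosed (C : Set E)) (h : ¬ DiscreteTopology C) :
    ∃ x : E, x ≠ 0 ∧ ∀ t : ℝ, t • x ∈ C := by
  -- extract small nonzero elements
  have hsmall : ∀ ε : ℝ, 0 < ε → ∃ y : E, y ∈ C ∧ y ≠ 0 ∧ ‖y‖ < ε := by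
    by_contra hcon
    push_neg at hcon
    obtain ⟨ε, hε, hεs⟩ := hcon
    apply h
    rw [discreteTopology_iff_isOpen_singleton_zero, isOpen_induced_iff]
    refine ⟨Metric.ball 0 ε, Metric.isOpen_ball, ?_⟩
    ext y
    simp only [Set.mem_preimage, Metric.mem_ball, dist_zero_right, Set.mem_singleton_iff]
    constructor
    · intro hy
      by_contra hy0
      have := hεs y y.2 (fun hh => hy0 (by exact_mod_cast Subtype.ext hh))
      exact absurd hy (not_lt.2 (this))
    · rintro rfl; simpa using hε
  choose y hyC hy0 hysmall using fun n : ℕ => hsmall (1 / (n + 1)) (by positivity)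
  set u : ℕ → E := fun n => ‖y n‖⁻¹ • y n with hu
  have hnorm : ∀ n, 0 < ‖y n‖ := fun n => norm_pos_iff.2 (hy0 n)
  have husph : ∀ n, u n ∈ Metric.sphere (0 : E) 1 := by
    intro n
    simp [hu, norm_smul, abs_of_nonneg (inv_nonneg.2 (norm_nonneg _)),
      inv_mul_cancel₀ (hnorm n).ne']
  obtain ⟨a, ha, φ, hφ, hlim⟩ :=
    (isCompact_sphere (0 : E) 1).tendsto_subseq husph
  refine ⟨a, by simpa using fun h0 => by simp [h0] at ha, ?_⟩
  intro t
  have hylim : Filter.Tendsto (fun j => ‖y (φ j)‖) Filter.atTop (nhds 0) := by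
    have hb : ∀ j : ℕ, ‖y (φ j)‖ ≤ 1 / (j + 1) := by
      intro j
      refine (hysmall (φ j)).le.trans ?_
      apply one_div_le_one_div_of_le (by positivity)
      have : j ≤ φ j := hφ.le_apply
      linarith [(Nat.cast_le (α := ℝ)).2 this]
    exact squeeze_zero (fun j => (hnorm _).le) hb tendsto_one_div_add_atTop_nhds_zero_nat
  -- k j • y (φ j) tends to t • a
  set k : ℕ → ℤ := fun j => ⌊t / ‖y (φ j)‖⌋ with hk
  have hmem : ∀ j, ((k j : ℝ) * ‖y (φ j)‖) • u (φ j) ∈ (C : Set E) := by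
    intro j
    have : ((k j : ℝ) * ‖y (φ j)‖) • u (φ j) = (k j : ℝ) • y (φ j) := by
      rw [hu, smul_smul, mul_assoc, mul_inv_cancel₀ (hnorm (φ j)).ne', mul_one]
    rw [this, Int.cast_smul_eq_zsmul ℝ]
    exact C.zsmul_mem (hyC (φ j)) _
  have hcoef : Filter.Tendsto (fun j => (k j : ℝ) * ‖y (φ j)‖) Filter.atTop (nhds t) := by
    have hle : ∀ j, |(k j : ℝ) * ‖y (φ j)‖ - t| ≤ ‖y (φ j)‖ := by
      intro j
      have h1 : (k j : ℝ) ≤ t / ‖y (φ j)‖ := Int.floor_le _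
      have h2 : t / ‖y (φ j)‖ < (k j : ℝ) + 1 := Int.lt_floor_add_one _
      have hn := hnorm (φ j)
      rw [abs_le]
      constructor
      · nlinarith [(div_lt_iff₀ hn).1 h2]
      · nlinarith [(le_div_iff₀ hn).1 h1]
    have : Filter.Tendsto (fun j => (k j : ℝ) * ‖y (φ j)‖ - t) Filter.atTop (nhds 0) :=
      squeeze_zero_norm hle hylim
    simpa using this.add_const t
  have hlimit : Filter.Tendsto (fun j => ((k j : ℝ) * ‖y (φ j)‖) • u (φ j))
      Filter.atTop (nhds (t • a)) := hcoef.smul hlim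
  exact hC.mem_of_tendsto hlimit (Filter.Eventually.of_forall hmem)

lemma keyLem : ∀ (n : ℕ) (E : Type) [NormedAddCommGroup E] [NormedSpace ℝ E]
    [FiniteDimensional ℝ E], finrank ℝ E = n →
    ∀ C : AddSubgroup E, IsClosed (C : Set E) → C ≠ ⊤ →
    ∃ f : E →ₗ[ℝ] ℝ, f ≠ 0 ∧ ∀ x ∈ C, ∃ k : ℤ, f x = k := by
  intro n
  induction n using Nat.strong_induction_on with
  | _ n ih =>
    intro E _ _ _ hrank C hclosed hne
    rcases Nat.eq_zero_or_pos n with hn0 | hnpos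
    · -- dimension 0 : contradiction
      exfalso
      subst hn0
      have : Subsingleton E := finrank_zero_iff.mp hrank
      exact hne (by ext x; simpa using (show x = 0 from Subsingleton.elim x 0) ▸ C.zero_mem)
    by_cases hdisc : DiscreteTopology C
    · -- discrete case
      set L : Submodule ℤ E := AddSubgroup.toIntSubmodule C with hL
      have hdiscL : DiscreteTopology L := hdisc
      by_cases hspan : Submodule.span ℝ (C : Set E) = ⊤
      · -- full lattice
        haveI : IsZLattice ℝ L := ⟨by rwa [show (L : Set E) = (C : Set E) from rfl]⟩
        haveI : Module.Finite ℤ L := ZLattice.module_finite ℝ L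
        haveI : Module.Free ℤ L := ZLattice.module_free ℝ L
        let b := Module.Free.chooseBasis ℤ L
        let b' := b.ofZLatticeBasis ℝ L
        have hcard : Nonempty (Module.Free.ChooseBasisIndex ℤ L) := by
          have h1 : finrank ℤ L = n := by rw [ZLattice.rank ℝ L, hrank]
          have h2 := Module.finrank_eq_card_chooseBasisIndex ℤ L
          exact Fintype.card_pos_iff.mp (by omega)
        obtain ⟨i₀⟩ := hcard
        refine ⟨b'.coord i₀, ?_, ?_⟩
        · intro hzero
          have : b'.coord i₀ (b' i₀) = 1 := by simp
          rw [hzero] at this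
          simp at this
        · intro x hx
          have hxL : x ∈ Submodule.span ℤ (Set.range b') := by
            rw [Basis.ofZLatticeBasis_span]
            exact hx
          obtain ⟨k, hk⟩ := (b'.mem_span_iff_repr_mem ℤ x).mp hxL i₀
          exact ⟨k, by simp [Basis.coord_apply, ← hk]⟩
      · -- span not everything
        obtain ⟨f, hf0, hfmap⟩ := Submodule.exists_dual_map_eq_bot_of_lt_top
          (lt_top_iff_ne_top.mpr hspan) inferInstance
        refine ⟨f, hf0, fun x hx => ⟨0, ?_⟩⟩
        have : f x ∈ (Submodule.span ℝ (C : Set E)).map f :=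
          ⟨x, Submodule.subset_span hx, rfl⟩
        rw [hfmap] at this
        simpa using this
    · -- non-discrete case: contains a line, quotient
      obtain ⟨x₀, hx0, hline⟩ := lemA C hclosed hdisc
      set p : Submodule ℝ E := Submodule.span ℝ {x₀} with hp
      have hpC : (p : Set E) ⊆ (C : Set E) := by
        intro z hz
        obtain ⟨t, rfl⟩ := Submodule.mem_span_singleton.mp hz
        exact hline t
      haveI hpc : IsClosed (p : Set E) := Submodule.closed_of_finiteDimensional p
      have hrq : finrank ℝ (E ⧸ p) = n - 1 := by
        have h1 := Submodule.finrank_quotient_add_finrank p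
        have h2 : finrank ℝ p = 1 := finrank_span_singleton hx0
        omega
      set C' : AddSubgroup (E ⧸ p) := C.map p.mkQ.toAddMonoidHom with hC'
      have hpre : (QuotientAddGroup.mk ⁻¹' (C' : Set (E ⧸ p)) : Set E) = (C : Set E) := by
        ext z
        simp only [Set.mem_preimage, SetLike.mem_coe, hC', AddSubgroup.mem_map]
        constructor
        · rintro ⟨c, hc, hcz⟩
          have hzc : z - c ∈ p := (Submodule.Quotient.eq p).mp
            (show (Submodule.Quotient.mk z : E ⧸ p) = Submodule.Quotient.mk c from hcz.symm)
          have : z = (z - c) + c := by abel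
          rw [this]
          exact C.add_mem (hpC hzc) hc
        · intro hz
          exact ⟨z, hz, rfl⟩
      have hclosed' : IsClosed (C' : Set (E ⧸ p)) := by
        rw [← isQuotientMap_quotient_mk'.isClosed_preimage]
        exact hpre ▸ hclosed
      have hne' : C' ≠ ⊤ := by
        intro htop
        apply hne
        ext z
        simp only [AddSubgroup.mem_top, iff_true]
        have : (p.mkQ z) ∈ C' := htop ▸ AddSubgroup.mem_top _
        have : z ∈ (QuotientAddGroup.mk ⁻¹' (C' : Set (E ⧸ p)) : Set E) := this
        rwa [hpre] at this
      obtain ⟨g, hg0, hgint⟩ := ih (n - 1) (by omega) (E ⧸ p) hrq C' hclosed' hne'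
      refine ⟨g.comp p.mkQ, ?_, ?_⟩
      · intro hzero
        obtain ⟨y, hy⟩ := DFunLike.ne_iff.mp hg0
        obtain ⟨z, rfl⟩ := p.mkQ_surjective y
        exact hy (by simpa using DFunLike.congr_fun hzero z)
      · intro x hx
        exact hgint _ ⟨x, hx, rfl⟩

theorem stmt_11 (d : ℕ) (hd : 0 < d) (G : AddSubgroup (EuclideanSpace ℝ (Fin d))) :
    Dense (G : Set (EuclideanSpace ℝ (Fin d))) ↔
      ∀ (H : Submodule ℝ (EuclideanSpace ℝ (Fin d))), Module.finrank ℝ H = d - 1 →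
        ∀ c : EuclideanSpace ℝ (Fin d),
          ¬ (G : Set (EuclideanSpace ℝ (Fin d))) ⊆
              {x | ∃ h ∈ H, ∃ k : ℤ, x = h + (k : ℝ) • c} := by
  set E := EuclideanSpace ℝ (Fin d) with hE
  have hfr : finrank ℝ E = d := finrank_euclideanSpace_fin
  constructor
  · intro hdense H hH c hsub
    by_cases hc : c ∈ H
    · have hHc : IsClosed (H : Set E) := Submodule.closed_of_finiteDimensional H
      have hGH : (G : Set E) ⊆ (H : Set E) := by
        intro x hx
        obtain ⟨h, hh, k, rfl⟩ := hsub hx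
        exact H.add_mem hh (H.smul_mem _ hc)
      have hHuniv : (H : Set E) = Set.univ := by
        apply Set.eq_univ_of_univ_subset
        calc Set.univ = closure (G : Set E) := hdense.closure_eq.symm
        _ ⊆ (H : Set E) := hHc.closure_subset_iff.mpr hGH
      have hHtop : H = ⊤ := by
        rw [Submodule.eq_top_iff']
        intro x
        exact Set.eq_univ_iff_forall.mp hHuniv x
      rw [hHtop, finrank_top, hfr] at hH
      omega
    · haveI : IsClosed (H : Set E) := Submodule.closed_of_finiteDimensional H
      have hcq : (H.mkQ c : E ⧸ H) ≠ 0 := by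
        simpa [Submodule.Quotient.mk_eq_zero] using hc
      obtain ⟨g, hg1⟩ := SeparatingDual.exists_eq_one (R := ℝ) hcq
      have hg1' : g (Submodule.Quotient.mk c) = 1 := hg1
      set F : E → ℝ := fun x => g (H.mkQ x) with hF
      have hFcont : Continuous F := g.continuous.comp H.mkQ.continuous_of_finiteDimensional
      have hT : IsClosed {x : E | ∃ k : ℤ, F x = (k : ℝ)} := by
        have : {x : E | ∃ k : ℤ, F x = (k : ℝ)} = F ⁻¹' (Set.range (Int.cast : ℤ → ℝ)) := by
          ext x; simp [eq_comm]
        rw [this]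
        exact (Int.isClosedEmbedding_coe_real.isClosed_range).preimage hFcont
      have hGT : (G : Set E) ⊆ {x : E | ∃ k : ℤ, F x = (k : ℝ)} := by
        intro x hx
        obtain ⟨h, hh, k, rfl⟩ := hsub hx
        refine ⟨k, ?_⟩
        have h0 : H.mkQ h = 0 := (Submodule.Quotient.mk_eq_zero H).mpr hh
        have h0' : g (Submodule.Quotient.mk h) = 0 := by
          rw [show (Submodule.Quotient.mk h : E ⧸ H) = 0 from h0]; simp
        simp [hF, map_add, map_smul, h0', hg1']
      obtain ⟨k, hk⟩ : ∃ k : ℤ, F ((2:ℝ)⁻¹ • c) = (k : ℝ) :=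
        (hT.closure_subset_iff.mpr hGT) (hdense _)
      have hhalf : F ((2:ℝ)⁻¹ • c) = (2:ℝ)⁻¹ := by simp [hF, map_smul, hg1']
      rw [hhalf] at hk
      have h2k : ((2 * k : ℤ) : ℝ) = ((1 : ℤ) : ℝ) := by push_cast; linarith
      have := Int.cast_injective (α := ℝ) h2k
      omega
  · intro hyp
    by_contra hnd
    set C := G.topologicalClosure with hC
    have hCc : IsClosed (C : Set E) := G.isClosed_topologicalClosure
    have hCne : C ≠ ⊤ := by
      intro htop
      apply hnd
      rw [dense_iff_closure_eq, ← AddSubgroup.topologicalClosure_coe,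
        show G.topologicalClosure = ⊤ from htop]
      rfl
    obtain ⟨f, hf0, hint⟩ := keyLem d E hfr C hCc hCne
    obtain ⟨x₀, hx₀⟩ := DFunLike.ne_iff.mp hf0
    simp only [LinearMap.zero_apply] at hx₀
    set c := (f x₀)⁻¹ • x₀ with hc
    have hfc : f c = 1 := by simp [hc, map_smul, inv_mul_cancel₀ hx₀]
    have hrange : LinearMap.range f = ⊤ := by
      rw [eq_top_iff]
      rintro z -
      exact ⟨z • c, by simp [map_smul, hfc]⟩
    have hker : finrank ℝ (LinearMap.ker f) = d - 1 := by
      have h1 := LinearMap.finrank_range_add_finrank_ker f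
      rw [hrange, finrank_top, finrank_self, hfr] at h1
      omega
    refine hyp (LinearMap.ker f) hker c ?_
    intro x hx
    obtain ⟨k, hk⟩ := hint x (G.le_topologicalClosure hx)
    exact ⟨x - (k : ℝ) • c, LinearMap.mem_ker.mpr (by simp [map_sub, map_smul, hk, hfc]),
      k, by abel⟩
end

section
/- Every closed additive subgroup G of ℝᵈ can be written in a unique way as G = V ⊕ Λ with V a linear subspace, Λ a discrete subgroup, and V orthogonal to Λ (i.e., every element of V is orthogonal to every element of Λ). -/
open Submodule Filter Topology

/-- The maximal linear subspace contained in a closed subgroup. -/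
def stmt12.lineSub {d : ℕ} (G : AddSubgroup (EuclideanSpace ℝ (Fin d))) :
    Submodule ℝ (EuclideanSpace ℝ (Fin d)) where
  carrier := {x | ∀ t : ℝ, t • x ∈ G}
  add_mem' := by
    intro a b ha hb t
    simpa [smul_add] using G.add_mem (ha t) (hb t)
  zero_mem' := by
    intro t; simpa using G.zero_mem
  smul_mem' := by
    intro c x hx t
    simpa [smul_smul] using hx (t * c)

lemma stmt12.discrete {d : ℕ} (G : AddSubgroup (EuclideanSpace ℝ (Fin d)))
    (hG : IsClosed (G : Set (EuclideanSpace ℝ (Fin d)))) :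
    ∃ ε > (0 : ℝ), ∀ x : EuclideanSpace ℝ (Fin d),
      x ∈ G → x ∈ (stmt12.lineSub G)ᗮ → ‖x‖ < ε → x = 0 := by
  by_contra h
  push_neg at h
  have key : ∀ n : ℕ, ∃ x : EuclideanSpace ℝ (Fin d),
      x ∈ G ∧ x ∈ (stmt12.lineSub G)ᗮ ∧ ‖x‖ < 1 / (n + 1) ∧ x ≠ 0 := by
    intro n
    obtain ⟨x, hx1, hx2, hx3, hx4⟩ := h (1 / (n + 1)) (by positivity)
    exact ⟨x, hx1, hx2, hx3, hx4⟩
  choose x hxG hxP hxn hx0 using key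
  set u : ℕ → EuclideanSpace ℝ (Fin d) := fun n => ‖x n‖⁻¹ • x n with hu
  have hnorm : ∀ n, ‖x n‖ ≠ 0 := fun n => norm_ne_zero_iff.2 (hx0 n)
  have husphere : ∀ n, u n ∈ Metric.sphere (0 : EuclideanSpace ℝ (Fin d)) 1 := by
    intro n
    simp [hu, norm_smul, abs_of_nonneg (inv_nonneg.2 (norm_nonneg _)),
      inv_mul_cancel₀ (hnorm n)]
  obtain ⟨L, hL, φ, hφ, hconv⟩ :=
    (isCompact_sphere (0 : EuclideanSpace ℝ (Fin d)) 1).tendsto_subseq husphere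
  have hLnorm : ‖L‖ = 1 := by simpa using hL
  -- norms of x (φ n) tend to 0
  have hxnorm0 : Tendsto (fun n => ‖x (φ n)‖) atTop (𝓝 0) := by
    have h1 : Tendsto (fun n : ℕ => 1 / ((n : ℝ) + 1)) atTop (𝓝 0) :=
      tendsto_one_div_add_atTop_nhds_zero_nat
    exact squeeze_zero (fun n => norm_nonneg _) (fun n => (hxn (φ n)).le)
      (h1.comp hφ.tendsto_atTop)
  -- L ∈ lineSub G
  have hLmem : L ∈ stmt12.lineSub G := by
    intro t
    have hmemG : ∀ n, (⌊t / ‖x (φ n)‖⌋ : ℤ) • x (φ n) ∈ G := fun n =>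
      zsmul_mem (hxG (φ n)) _
    have hy : Tendsto (fun n => (⌊t / ‖x (φ n)‖⌋ : ℤ) • x (φ n)) atTop (𝓝 (t • L)) := by
      have heq : ∀ n, (⌊t / ‖x (φ n)‖⌋ : ℤ) • x (φ n)
          = ((⌊t / ‖x (φ n)‖⌋ : ℝ) * ‖x (φ n)‖) • u (φ n) := by
        intro n
        rw [hu]
        rw [← Int.cast_smul_eq_zsmul ℝ]
        show _ = ((_ : ℝ) * _) • (_ • _)
        rw [smul_smul]
        congr 1
        field_simp [hnorm (φ n)]
      simp only [heq]
      have hc : Tendsto (fun n => (⌊t / ‖x (φ n)‖⌋ : ℝ) * ‖x (φ n)‖) atTop (𝓝 t) := by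
        have hbound : ∀ n, |(⌊t / ‖x (φ n)‖⌋ : ℝ) * ‖x (φ n)‖ - t| ≤ ‖x (φ n)‖ := by
          intro n
          have h1 : |(⌊t / ‖x (φ n)‖⌋ : ℝ) - t / ‖x (φ n)‖| ≤ 1 := by
            rw [abs_sub_comm]
            have h2 := Int.sub_one_lt_floor (t / ‖x (φ n)‖)
            have h3 := Int.floor_le (t / ‖x (φ n)‖)
            rw [abs_le]; constructor <;> linarith
          have hpos : (0 : ℝ) < ‖x (φ n)‖ := lt_of_le_of_ne (norm_nonneg _) (Ne.symm (hnorm (φ n)))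
          calc |(⌊t / ‖x (φ n)‖⌋ : ℝ) * ‖x (φ n)‖ - t|
              = |(⌊t / ‖x (φ n)‖⌋ : ℝ) - t / ‖x (φ n)‖| * ‖x (φ n)‖ := by
                rw [← abs_of_pos hpos, ← abs_mul]
                congr 1
                field_simp
                rw [abs_of_pos hpos]; ring
            _ ≤ 1 * ‖x (φ n)‖ := by
                exact mul_le_mul_of_nonneg_right h1 (norm_nonneg _)
            _ = ‖x (φ n)‖ := one_mul _
        have : Tendsto (fun n => |(⌊t / ‖x (φ n)‖⌋ : ℝ) * ‖x (φ n)‖ - t|) atTop (𝓝 0) :=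
          squeeze_zero (fun n => abs_nonneg _) hbound hxnorm0
        rw [tendsto_iff_dist_tendsto_zero]
        simpa [Real.dist_eq] using this
      exact hc.smul hconv
    exact hG.mem_of_tendsto hy (Filter.Eventually.of_forall hmemG)
  have hLperp : L ∈ (stmt12.lineSub G)ᗮ := by
    have hclosed := (stmt12.lineSub G).isClosed_orthogonal
    exact hclosed.mem_of_tendsto hconv (Filter.Eventually.of_forall fun n =>
      Submodule.smul_mem _ _ (hxP (φ n)))
  have : inner ℝ L L = 0 :=
    (Submodule.mem_orthogonal _ L).1 hLperp L hLmem
  rw [inner_self_eq_zero] at this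
  rw [this] at hLnorm
  simp at hLnorm

lemma stmt12.char {d : ℕ} (G : AddSubgroup (EuclideanSpace ℝ (Fin d)))
    (V' : Submodule ℝ (EuclideanSpace ℝ (Fin d)))
    (Λ' : AddSubgroup (EuclideanSpace ℝ (Fin d)))
    (hdisc : ∃ ε > (0 : ℝ), ∀ x ∈ Λ', ‖x‖ < ε → x = 0)
    (horth : ∀ v ∈ V', ∀ l ∈ Λ', inner ℝ v l = (0 : ℝ))
    (hmem : ∀ x, x ∈ G ↔ ∃ v ∈ V', ∃ l ∈ Λ', x = v + l) :
    V' = stmt12.lineSub G ∧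
      ∀ x, x ∈ Λ' ↔ x ∈ G ∧ x ∈ (stmt12.lineSub G)ᗮ := by
  obtain ⟨ε, hε, hd⟩ := hdisc
  have hΛperp : ∀ l ∈ Λ', l ∈ V'ᗮ := fun l hl =>
    (Submodule.mem_orthogonal V' l).2 fun v hv => horth v hv l hl
  have hVle : V' ≤ stmt12.lineSub G := by
    intro v hv t
    exact (hmem (t • v)).2 ⟨t • v, V'.smul_mem t hv, 0, Λ'.zero_mem, by simp⟩
  have hWle : stmt12.lineSub G ≤ V' := by
    intro x hx
    obtain ⟨v, hv, l, hl, hxe⟩ := (hmem x).1 (by simpa using hx 1)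
    by_cases hl0 : l = 0
    · rw [hxe, hl0, add_zero]; exact hv
    exfalso
    have hlnorm : (0 : ℝ) < ‖l‖ := norm_pos_iff.2 hl0
    set t : ℝ := ε / (2 * ‖l‖) with ht
    have htpos : 0 < t := by positivity
    obtain ⟨v2, hv2, l2, hl2, he2⟩ := (hmem (t • x)).1 (hx t)
    have hperp1 : t • l ∈ V'ᗮ := Submodule.smul_mem _ _ (hΛperp l hl)
    have hperp2 : l2 ∈ V'ᗮ := hΛperp l2 hl2
    have hkey : t • v + t • l = v2 + l2 := by rw [← smul_add, ← hxe, he2]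
    have hdiff : v2 - t • v = t • l - l2 := by
      rw [sub_eq_sub_iff_add_eq_add, ← hkey]; abel
    have hm1 : v2 - t • v ∈ V' := V'.sub_mem hv2 (V'.smul_mem t hv)
    have hm2 : v2 - t • v ∈ V'ᗮ := by rw [hdiff]; exact Submodule.sub_mem _ hperp1 hperp2
    have hz : v2 - t • v = 0 := by
      have := (Submodule.mem_orthogonal V' _).1 hm2 _ hm1
      rwa [inner_self_eq_zero] at this
    have hl2eq : l2 = t • l := by
      have := hdiff
      rw [hz] at this
      have := this.symm
      rwa [sub_eq_zero, eq_comm] at this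
    have htl : t • l ∈ Λ' := hl2eq ▸ hl2
    have hnorm : ‖t • l‖ < ε := by
      rw [norm_smul, Real.norm_eq_abs, abs_of_pos htpos, ht]
      rw [div_mul_eq_mul_div, mul_comm]
      rw [div_lt_iff₀ (by positivity)]
      nlinarith
    have := hd _ htl hnorm
    rw [smul_eq_zero] at this
    rcases this with h | h
    · exact absurd h (ne_of_gt htpos)
    · exact hl0 h
  have hVeq : V' = stmt12.lineSub G := le_antisymm hVle hWle
  refine ⟨hVeq, fun x => ?_⟩
  constructor
  · intro hx
    refine ⟨(hmem x).2 ⟨0, V'.zero_mem, x, hx, by simp⟩, ?_⟩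
    rw [← hVeq]
    exact hΛperp x hx
  · rintro ⟨hxG, hxW⟩
    obtain ⟨v, hv, l, hl, he⟩ := (hmem x).1 hxG
    have hvW : v ∈ stmt12.lineSub G := hVeq ▸ hv
    have hlW : l ∈ (stmt12.lineSub G)ᗮ := by rw [← hVeq]; exact hΛperp l hl
    have hvperp : v ∈ (stmt12.lineSub G)ᗮ := by
      have : v = x - l := by rw [he]; abel
      rw [this]
      exact Submodule.sub_mem _ hxW hlW
    have hv0 : v = 0 := by
      have := (Submodule.mem_orthogonal _ _).1 hvperp _ hvW
      rwa [inner_self_eq_zero] at this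
    rw [he, hv0, zero_add]
    exact hl

theorem stmt_12 (d : ℕ) (G : AddSubgroup (EuclideanSpace ℝ (Fin d)))
    (hG : IsClosed (G : Set (EuclideanSpace ℝ (Fin d)))) :
    ∃ (V : Submodule ℝ (EuclideanSpace ℝ (Fin d)))
      (Λ : AddSubgroup (EuclideanSpace ℝ (Fin d))),
      ((∃ ε > (0 : ℝ), ∀ x ∈ Λ, ‖x‖ < ε → x = 0) ∧
        (∀ v ∈ V, ∀ l ∈ Λ, inner ℝ v l = (0 : ℝ)) ∧
        (∀ x, x ∈ G ↔ ∃ v ∈ V, ∃ l ∈ Λ, x = v + l)) ∧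
      ∀ (V' : Submodule ℝ (EuclideanSpace ℝ (Fin d)))
        (Λ' : AddSubgroup (EuclideanSpace ℝ (Fin d))),
        ((∃ ε > (0 : ℝ), ∀ x ∈ Λ', ‖x‖ < ε → x = 0) ∧
          (∀ v ∈ V', ∀ l ∈ Λ', inner ℝ v l = (0 : ℝ)) ∧
          (∀ x, x ∈ G ↔ ∃ v ∈ V', ∃ l ∈ Λ', x = v + l)) →
        V = V' ∧ Λ = Λ' := by
  classical
  set W := stmt12.lineSub G with hW
  set Λ : AddSubgroup (EuclideanSpace ℝ (Fin d)) := G ⊓ Wᗮ.toAddSubgroup with hΛ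
  have hΛmem : ∀ x, x ∈ Λ ↔ x ∈ G ∧ x ∈ Wᗮ := by
    intro x
    rw [hΛ, AddSubgroup.mem_inf, Submodule.mem_toAddSubgroup]
  have hWsubG : ∀ v ∈ W, v ∈ G := fun v hv => by simpa using hv 1
  have hdisc : ∃ ε > (0 : ℝ), ∀ x ∈ Λ, ‖x‖ < ε → x = 0 := by
    obtain ⟨ε, hε, hd⟩ := stmt12.discrete G hG
    exact ⟨ε, hε, fun x hx hn => hd x ((hΛmem x).1 hx).1 ((hΛmem x).1 hx).2 hn⟩
  have horth : ∀ v ∈ W, ∀ l ∈ Λ, inner ℝ v l = (0 : ℝ) := fun v hv l hl =>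
    (Submodule.mem_orthogonal W l).1 ((hΛmem l).1 hl).2 v hv
  have hmem : ∀ x, x ∈ G ↔ ∃ v ∈ W, ∃ l ∈ Λ, x = v + l := by
    intro x
    constructor
    · intro hx
      refine ⟨(orthogonalProjection W x : EuclideanSpace ℝ (Fin d)),
        (orthogonalProjection W x).2, x - orthogonalProjection W x, ?_, by abel⟩
      rw [hΛmem]
      exact ⟨G.sub_mem hx (hWsubG _ (orthogonalProjection W x).2),
        Submodule.sub_starProjection_mem_orthogonal (K := W) x⟩
    · rintro ⟨v, hv, l, hl, rfl⟩
      exact G.add_mem (hWsubG v hv) ((hΛmem l).1 hl).1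
  refine ⟨W, Λ, ⟨hdisc, horth, hmem⟩, ?_⟩
  rintro V' Λ' ⟨hdisc', horth', hmem'⟩
  obtain ⟨hVeq, hΛchar⟩ := stmt12.char G V' Λ' hdisc' horth' hmem'
  refine ⟨hVeq.symm, ?_⟩
  ext x
  rw [hΛmem, hΛchar]
end

section
/- Let Λ be a discrete subgroup of ℝᵈ and V a linear subspace with V ∩ span_ℝ(Λ) = {0}. Then inf{ dist(0, V + a) : a ∈ Λ, a ≠ 0 } > 0, i.e., the affine subspaces V + a for nonzero a ∈ Λ are uniformly bounded away from the origin. -/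
theorem stmt_14 (d : ℕ) (Λ : AddSubgroup (EuclideanSpace ℝ (Fin d)))
    (hdisc : ∃ ε > (0 : ℝ), ∀ x ∈ Λ, ‖x‖ < ε → x = 0)
    (V : Submodule ℝ (EuclideanSpace ℝ (Fin d)))
    (hV : V ⊓ Submodule.span ℝ (Λ : Set (EuclideanSpace ℝ (Fin d))) = ⊥) :
    ∃ δ > (0 : ℝ), ∀ a ∈ Λ, a ≠ 0 → ∀ v ∈ V, δ ≤ ‖v + a‖ := by
  obtain ⟨ε, hε, hεd⟩ := hdisc
  set E := EuclideanSpace ℝ (Fin d)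
  set W : Submodule ℝ E := Submodule.span ℝ (Λ : Set E) with hW
  obtain ⟨Q, hQ⟩ := Submodule.exists_isCompl (V ⊔ W)
  have hcompl : IsCompl W (V ⊔ Q) := by
    constructor
    · rw [disjoint_iff_inf_le]
      rintro x ⟨hxW, hxVQ⟩
      obtain ⟨v, hv, q, hq, rfl⟩ := Submodule.mem_sup.1 hxVQ
      have hq0 : q ∈ (V ⊔ W) ⊓ Q := by
        constructor
        · have : q = (v + q) - v := by abel
          rw [this]
          exact Submodule.sub_mem _ (Submodule.mem_sup_right hxW)
            (Submodule.mem_sup_left hv)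
        · exact hq
      rw [hQ.inf_eq_bot] at hq0
      simp only [Submodule.mem_bot] at hq0
      subst hq0
      have hv0 : v ∈ V ⊓ W := ⟨hv, by simpa using hxW⟩
      rw [hV] at hv0
      simp only [Submodule.mem_bot] at hv0
      simp [hv0]
    · rw [codisjoint_iff_le_sup]
      have : (V ⊔ W) ⊔ Q = ⊤ := hQ.sup_eq_top
      rw [← this]
      intro x hx
      obtain ⟨y, hy, q, hq, rfl⟩ := Submodule.mem_sup.1 hx
      obtain ⟨v, hv, w, hw, rfl⟩ := Submodule.mem_sup.1 hy
      have : v + w + q = w + (v + q) := by abel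
      rw [this]
      exact Submodule.add_mem _ (Submodule.mem_sup_left hw)
        (Submodule.mem_sup_right (Submodule.mem_sup.2 ⟨v, hv, q, hq, rfl⟩))
  set π : E →L[ℝ] W :=
    LinearMap.toContinuousLinearMap (W.linearProjOfIsCompl (V ⊔ Q) hcompl) with hπ
  refine ⟨ε / (‖π‖ + 1), div_pos hε (by positivity), ?_⟩
  intro a ha ha0 v hv
  have haW : a ∈ W := Submodule.subset_span ha
  have hπva : π (v + a) = (⟨a, haW⟩ : W) := by
    rw [map_add]
    have h1 : π v = 0 := by
      simp only [hπ, LinearMap.coe_toContinuousLinearMap']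
      exact Submodule.linearProjOfIsCompl_apply_right' hcompl (x := v) (Submodule.mem_sup_left hv)
    have h2 : π a = (⟨a, haW⟩ : W) := by
      simp only [hπ, LinearMap.coe_toContinuousLinearMap']
      exact Submodule.linearProjOfIsCompl_apply_left hcompl ⟨a, haW⟩
    rw [h1, h2, zero_add]
  have hεa : ε ≤ ‖a‖ := by
    by_contra h
    exact ha0 (hεd a ha (lt_of_not_ge h))
  have hbound : ‖a‖ ≤ (‖π‖ + 1) * ‖v + a‖ := by
    have := π.le_opNorm (v + a)
    rw [hπva] at this
    have hna : ‖(⟨a, haW⟩ : W)‖ = ‖a‖ := rfl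
    rw [hna] at this
    calc ‖a‖ ≤ ‖π‖ * ‖v + a‖ := this
      _ ≤ (‖π‖ + 1) * ‖v + a‖ := by
          apply mul_le_mul_of_nonneg_right (by linarith) (norm_nonneg _)
  rw [div_le_iff₀ (by positivity)]
  calc ε ≤ ‖a‖ := hεa
    _ ≤ (‖π‖ + 1) * ‖v + a‖ := hbound
    _ = ‖v + a‖ * (‖π‖ + 1) := mul_comm _ _
end
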